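/- Two distinct plane conics with no common component intersect in at most 4 points (Bézout's theorem for conics). -/

import Mathlib

open MvPolynomial Matrix

namespace BezoutAux

variable {K : Type*} [Field K]

lemma eval_aeval' {n m : ℕ} (σ : Fin n → MvPolynomial (Fin m) K)
    (x : Fin m → K) (q : MvPolynomial (Fin n) K) :
    eval x (aeval σ q) = eval (fun i => eval x (σ i)) q := by
  induction q using MvPolynomial.induction_on with
  | C a => simp
  | add p q hp hq => rw [map_add, map_add, hp, hq, map_add]
  | mul_X p i hp =>
      rw [_root_.map_mul, _root_.map_mul, aeval_X, _root_.map_mul, hp, eval_X]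

lemma degree_fin {n : ℕ} (d : Fin n →₀ ℕ) : d.degree = ∑ i, d i :=
  Finset.sum_subset (Finset.subset_univ _)
    (fun _ _ h => Finsupp.notMem_support_iff.mp h)

lemma eq_single_of_degree_one {n : ℕ} (d : Fin n →₀ ℕ) (hd : d.degree = 1) :
    ∃ i, d = Finsupp.single i 1 := by
  rw [degree_fin] at hd
  obtain ⟨i, hi⟩ : ∃ i, d i ≠ 0 := by
    by_contra h
    push_neg at h
    simp [h] at hd
  refine ⟨i, ?_⟩
  have h1 : d i = 1 := by
    have h2 : d i ≤ ∑ j, d j :=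
      Finset.single_le_sum (fun j _ => Nat.zero_le _) (Finset.mem_univ i)
    omega
  have hrest : ∀ j, j ≠ i → d j = 0 := by
    intro j hj
    have hsplit : d i + ∑ x ∈ Finset.univ.erase i, d x = ∑ x, d x :=
      Finset.add_sum_erase Finset.univ _ (Finset.mem_univ i)
    have hj' : j ∈ Finset.univ.erase i := Finset.mem_erase.mpr ⟨hj, Finset.mem_univ _⟩
    have h3 : d j ≤ ∑ x ∈ Finset.univ.erase i, d x :=
      Finset.single_le_sum (fun j _ => Nat.zero_le _) hj'
    omega
  ext j
  by_cases h : j = i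
  · subst h; simp [h1]
  · simp [Finsupp.single_apply, Ne.symm h, h, hrest j h]

lemma fin2_deg2 (d : Fin 2 →₀ ℕ) (hd : d.degree = 2) :
    d = Finsupp.single 0 2 ∨ d = Finsupp.single 0 1 + Finsupp.single 1 1 ∨
      d = Finsupp.single 1 2 := by
  rw [degree_fin, Fin.sum_univ_two] at hd
  have h0 : d 0 ≤ 2 := by omega
  interval_cases h : d 0
  · right; right; ext j; fin_cases j <;> simp [Finsupp.single_apply] <;> omega
  · right; left; ext j; fin_cases j <;> simp [Finsupp.single_apply] <;> omega
  · left; ext j; fin_cases j <;> simp [Finsupp.single_apply] <;> omega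

lemma restrict_quad {q : MvPolynomial (Fin 3) K} (hq : q.IsHomogeneous 2)
    (u w : Fin 3 → K) :
    ∃ A B C : K, ∀ s t : K,
      eval (s • u + t • w) q = A * s ^ 2 + B * (s * t) + C * t ^ 2 := by
  set σ : Fin 3 → MvPolynomial (Fin 2) K :=
    fun i => MvPolynomial.C (u i) * X 0 + MvPolynomial.C (w i) * X 1 with hσ
  set q' : MvPolynomial (Fin 2) K := aeval σ q with hq'def
  have hq' : q'.IsHomogeneous 2 := by
    have := hq.aeval σ (n := 1) (fun i =>
      ((isHomogeneous_C_mul_X (u i) 0).add (isHomogeneous_C_mul_X (w i) 1)))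
    simpa only [mul_one, one_mul] using this
  refine ⟨coeff (Finsupp.single 0 2) q',
    coeff (Finsupp.single 0 1 + Finsupp.single 1 1) q',
    coeff (Finsupp.single 1 2) q', fun s t => ?_⟩
  have hpt : (fun i => eval ![s, t] (σ i)) = s • u + t • w := by
    funext i
    simp [hσ]
    ring
  have he : eval (s • u + t • w) q = eval ![s, t] q' := by
    rw [hq'def, eval_aeval', hpt]
  rw [he]
  have d1 : (Finsupp.single (0 : Fin 2) 2) ≠ Finsupp.single 0 1 + Finsupp.single 1 1 := by
    intro h; have := DFunLike.congr_fun h 1; simp [Finsupp.single_apply] at this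
  have d2 : (Finsupp.single (0 : Fin 2) 2) ≠ Finsupp.single 1 2 := by
    intro h; have := DFunLike.congr_fun h 0; simp [Finsupp.single_apply] at this
  have d3 : (Finsupp.single (0:Fin 2) 1 + Finsupp.single 1 1) ≠ Finsupp.single 1 2 := by
    intro h; have := DFunLike.congr_fun h 0; simp [Finsupp.single_apply] at this
  have e1 : (Finsupp.single (0 : Fin 2) 2).degree = 2 := by
    rw [degree_fin]; simp [Finsupp.single_apply]
  have e2 : ((Finsupp.single (0:Fin 2) 1 + Finsupp.single 1 1)).degree = 2 := by
    rw [degree_fin]; simp [Fin.sum_univ_two, Finsupp.single_apply]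
  have e3 : (Finsupp.single (1 : Fin 2) 2).degree = 2 := by
    rw [degree_fin]; simp [Fin.sum_univ_two, Finsupp.single_apply]
  have hrepr : q' = monomial (Finsupp.single 0 2) (coeff (Finsupp.single 0 2) q')
      + monomial (Finsupp.single 0 1 + Finsupp.single 1 1)
          (coeff (Finsupp.single 0 1 + Finsupp.single 1 1) q')
      + monomial (Finsupp.single 1 2) (coeff (Finsupp.single 1 2) q') := by
    ext d
    simp only [coeff_add, coeff_monomial]
    by_cases hd : d.degree = 2
    · rcases fin2_deg2 d hd with rfl | rfl | rfl <;>
        simp [d1, d2, d3, Ne.symm d1, Ne.symm d2, Ne.symm d3]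
    · rw [hq'.coeff_eq_zero hd, if_neg, if_neg, if_neg]
      · ring
      · intro h; exact hd (h ▸ e3)
      · intro h; exact hd (h ▸ e2)
      · intro h; exact hd (h ▸ e1)
  rw [hrepr]
  simp [eval_monomial, Finsupp.prod_add_index, Finsupp.prod_single_index, pow_add,
    d1, d2, d3, Ne.symm d1, Ne.symm d2, Ne.symm d3]

lemma repr_linear {p : MvPolynomial (Fin 3) K} (hp : p.IsHomogeneous 1)
    (v : Fin 3 → K) :
    eval v p = ∑ i, coeff (Finsupp.single i 1) p * v i := by
  have hrepr : p = ∑ i, monomial (Finsupp.single i 1) (coeff (Finsupp.single i 1) p) := by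
    ext d
    rw [coeff_sum]
    by_cases hd : d.degree = 1
    · obtain ⟨i, rfl⟩ := eq_single_of_degree_one d hd
      rw [Finset.sum_eq_single i]
      · simp [coeff_monomial]
      · intro j _ hj
        simp only [coeff_monomial]
        rw [if_neg]
        simp [Finsupp.single_eq_single_iff, hj]
      · simp
    · rw [hp.coeff_eq_zero hd]
      symm
      apply Finset.sum_eq_zero
      intro i _
      simp only [coeff_monomial]
      rw [if_neg]
      intro h
      apply hd
      rw [← h, degree_fin]
      simp [Finsupp.single_apply]
  conv_lhs => rw [hrepr]
  rw [map_sum]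
  congr 1
  funext i
  simp [eval_monomial, Finsupp.prod_single_index]

/-- The dot-product-with-`a` linear functional. -/
def dotFun (a : Fin 3 → K) : (Fin 3 → K) →ₗ[K] K where
  toFun v := ∑ i, a i * v i
  map_add' x y := by simp [mul_add, Finset.sum_add_distrib]
  map_smul' c x := by simp [Finset.mul_sum]; congr 1; funext i; ring

lemma exists_ann {u w : Fin 3 → K} (h : LinearIndependent K ![u, w]) :
    ∃ a : Fin 3 → K, a ≠ 0 ∧
      ∀ v : Fin 3 → K, ((∑ i, a i * v i) = 0 ↔ v ∈ Submodule.span K {u, w}) := by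
  set a := crossProduct u w with ha
  refine ⟨a, crossProduct_ne_zero_iff_linearIndependent.mpr h, fun v => ?_⟩
  have key : LinearMap.ker (dotFun a) = Submodule.span K {u, w} := by
    have hle : Submodule.span K {u, w} ≤ LinearMap.ker (dotFun a) := by
      have hu : dotFun a u = 0 := by
        have h0 : u ⬝ᵥ (crossProduct u w) = 0 := dot_self_cross u w
        simp only [dotFun, LinearMap.coe_mk, AddHom.coe_mk]
        simpa [dotProduct, mul_comm] using h0
      have hw : dotFun a w = 0 := by
        have h0 : w ⬝ᵥ (crossProduct u w) = 0 := dot_cross_self u w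
        simp only [dotFun, LinearMap.coe_mk, AddHom.coe_mk]
        simpa [dotProduct, mul_comm] using h0
      rw [Submodule.span_le]
      intro x hx
      rcases hx with h' | h'
      · exact LinearMap.mem_ker.mpr (by rw [h']; exact hu)
      · rw [Set.mem_singleton_iff] at h'
        exact LinearMap.mem_ker.mpr (by rw [h']; exact hw)
    have ha0 : a ≠ 0 := crossProduct_ne_zero_iff_linearIndependent.mpr h
    obtain ⟨j, hj⟩ : ∃ j, a j ≠ 0 := by
      by_contra hc; push_neg at hc; exact ha0 (funext hc)
    have hsurj : Function.Surjective (dotFun a) := by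
      intro y
      refine ⟨(fun i => if i = j then y * (a j)⁻¹ else 0), ?_⟩
      simp only [dotFun, LinearMap.coe_mk, AddHom.coe_mk]
      rw [Finset.sum_eq_single j]
      · simp only [if_pos rfl, ↓reduceIte]
        field_simp
      · intro i _ hij; simp [hij]
      · simp
    have hrange : LinearMap.range (dotFun a) = ⊤ := LinearMap.range_eq_top.mpr hsurj
    have hrank := LinearMap.finrank_range_add_finrank_ker (dotFun a)
    rw [hrange] at hrank
    have h1 : Module.finrank K (⊤ : Submodule K K) = 1 := by
      simp [finrank_top]
    have h3 : Module.finrank K (Fin 3 → K) = 3 := by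
      simp [Module.finrank_fintype_fun_eq_card]
    rw [h1, h3] at hrank
    have hker : Module.finrank K (LinearMap.ker (dotFun a)) = 2 := by omega
    have hspan : Module.finrank K (Submodule.span K ({u, w} : Set (Fin 3 → K))) = 2 := by
      have : ({u, w} : Set (Fin 3 → K)) = Set.range ![u, w] := by
        rw [Matrix.range_cons, Matrix.range_cons_empty]; rfl
      rw [this, finrank_span_eq_card h]
      simp
    exact (Submodule.eq_of_le_of_finrank_le hle (by rw [hker, hspan])).symm
  rw [← key]
  exact ⟨fun hv => LinearMap.mem_ker.mpr hv, fun hv => LinearMap.mem_ker.mp hv⟩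

lemma dvd_of_vanishing [Infinite K] (a : Fin 3 → K) (j : Fin 3) (hj : a j = 1)
    (q : MvPolynomial (Fin 3) K)
    (hvan : ∀ v : Fin 3 → K, (∑ i, a i * v i) = 0 → eval v q = 0) :
    (∑ i, MvPolynomial.C (a i) * X i) ∣ q := by
  set ℓ : MvPolynomial (Fin 3) K := ∑ i, MvPolynomial.C (a i) * X i with hℓ
  have evalℓ : ∀ x : Fin 3 → K, eval x ℓ = ∑ i, a i * x i := by
    intro x; rw [hℓ, map_sum]; simp
  set σ : Fin 3 → MvPolynomial (Fin 3) K :=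
    fun i => if i = j then X j - ℓ else X i with hσ
  have h0 : aeval σ q = 0 := by
    apply MvPolynomial.funext
    intro x
    rw [eval_aeval']
    rw [map_zero]
    set u : Fin 3 → K := fun i => eval x (σ i) with hu
    apply hvan
    have hui : ∀ i, u i = if i = j then x j - (∑ i, a i * x i) else x i := by
      intro i
      by_cases h : i = j <;> simp [hu, hσ, h, evalℓ]
    have hterm : ∀ i, a i * u i = a i * x i - (if i = j then (∑ i, a i * x i) else 0) := by
      intro i
      rw [hui i]
      by_cases h : i = j
      · subst h; rw [if_pos rfl, if_pos rfl, hj]; ring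
      · rw [if_neg h, if_neg h]; ring
    calc (∑ i, a i * u i)
        = (∑ i, (a i * x i - if i = j then (∑ k, a k * x k) else 0)) := by
          apply Finset.sum_congr rfl; intro i _; exact hterm i
      _ = (∑ i, a i * x i) - (∑ i, if i = j then (∑ k, a k * x k) else 0) := by
          rw [Finset.sum_sub_distrib]
      _ = 0 := by rw [Finset.sum_ite_eq' Finset.univ j]; simp
  have hmk : Ideal.Quotient.mkₐ K (Ideal.span {ℓ}) q = 0 := by
    have hcomp : (Ideal.Quotient.mkₐ K (Ideal.span {ℓ})).comp
        (aeval σ : MvPolynomial (Fin 3) K →ₐ[K] MvPolynomial (Fin 3) K)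
        = Ideal.Quotient.mkₐ K (Ideal.span {ℓ}) := by
      apply MvPolynomial.algHom_ext
      intro i
      simp only [AlgHom.comp_apply, aeval_X]
      by_cases h : i = j
      · subst h
        rw [hσ]
        simp only [if_pos]
        rw [Ideal.Quotient.mkₐ_eq_mk, Ideal.Quotient.eq]
        simpa using Ideal.subset_span (Set.mem_singleton ℓ)
      · rw [hσ]; simp only [if_neg h]
    have := congrArg (fun φ => φ q) hcomp
    simp only [AlgHom.comp_apply] at this
    rw [← this, h0, map_zero]
  rw [Ideal.Quotient.mkₐ_eq_mk, Ideal.Quotient.eq_zero_iff_mem,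
    Ideal.mem_span_singleton] at hmk
  exact hmk

lemma factor_homog {q ℓ M : MvPolynomial (Fin 3) K} (hq : q.IsHomogeneous 2)
    (hℓ : ℓ.IsHomogeneous 1) (hfac : q = ℓ * M) :
    q = ℓ * homogeneousComponent 1 M := by
  have hdecomp := sum_homogeneousComponent M
  have step : q = ∑ i ∈ Finset.range (M.totalDegree + 1),
      (if 1 + i = 2 then ℓ * homogeneousComponent i M else 0) := by
    calc q = homogeneousComponent 2 q := by
            rw [homogeneousComponent_of_mem ((mem_homogeneousSubmodule _ _).mpr hq)]
            simp
      _ = homogeneousComponent 2 (ℓ * ∑ i ∈ Finset.range (M.totalDegree + 1),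
            homogeneousComponent i M) := by rw [hdecomp, ← hfac]
      _ = ∑ i ∈ Finset.range (M.totalDegree + 1),
            homogeneousComponent 2 (ℓ * homogeneousComponent i M) := by
          rw [Finset.mul_sum, map_sum]
      _ = ∑ i ∈ Finset.range (M.totalDegree + 1),
            (if 1 + i = 2 then ℓ * homogeneousComponent i M else 0) := by
          apply Finset.sum_congr rfl
          intro i _
          have hmem : ℓ * homogeneousComponent i M ∈
              homogeneousSubmodule (Fin 3) K (1 + i) :=
            (mem_homogeneousSubmodule _ _).mpr
              (hℓ.mul (homogeneousComponent_isHomogeneous i M))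
          rw [homogeneousComponent_of_mem hmem]
          by_cases h : (2 : ℕ) = 1 + i
          · rw [if_pos h, if_pos h.symm]
          · rw [if_neg h, if_neg (fun hh => h hh.symm)]
  have step2 : q = ∑ i ∈ Finset.range (M.totalDegree + 1),
      (if i = 1 then ℓ * homogeneousComponent i M else 0) := by
    rw [step]
    apply Finset.sum_congr rfl
    intro i _
    congr 1
    simp only [eq_iff_iff]
    omega
  rw [step2, Finset.sum_ite_eq' (Finset.range (M.totalDegree + 1)) 1
    (fun i => ℓ * homogeneousComponent i M)]
  by_cases h : 1 ∈ Finset.range (M.totalDegree + 1)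
  · rw [if_pos h]
  · rw [if_neg h]
    have : M.totalDegree < 1 := by
      simp only [Finset.mem_range] at h; omega
    rw [homogeneousComponent_eq_zero 1 M this, mul_zero]

/-- normalized annihilator -/
lemma exists_ann' {u w : Fin 3 → K} (h : LinearIndependent K ![u, w]) :
    ∃ (a : Fin 3 → K) (j : Fin 3), a j = 1 ∧
      ∀ v : Fin 3 → K, ((∑ i, a i * v i) = 0 ↔ v ∈ Submodule.span K {u, w}) := by
  obtain ⟨a, ha0, hker⟩ := exists_ann h
  obtain ⟨j, hj⟩ : ∃ j, a j ≠ 0 := by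
    by_contra hc; push_neg at hc; exact ha0 (funext hc)
  refine ⟨fun i => (a j)⁻¹ * a i, j, by field_simp, fun v => ?_⟩
  rw [← hker v]
  constructor
  · intro h0
    have : (a j)⁻¹ * ∑ i, a i * v i = 0 := by
      rw [Finset.mul_sum]
      rw [← h0]
      apply Finset.sum_congr rfl
      intro i _; ring
    rcases mul_eq_zero.mp this with h' | h'
    · exact absurd h' (inv_ne_zero hj)
    · exact h'
  · intro h0
    calc (∑ i, (a j)⁻¹ * a i * v i) = (a j)⁻¹ * ∑ i, a i * v i := by
          rw [Finset.mul_sum]; apply Finset.sum_congr rfl; intro i _; ring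
      _ = 0 := by rw [h0, mul_zero]

lemma linear_isHomogeneous (a : Fin 3 → K) :
    (∑ i, MvPolynomial.C (a i) * X i : MvPolynomial (Fin 3) K).IsHomogeneous 1 :=
  IsHomogeneous.sum _ _ _ (fun i _ => isHomogeneous_C_mul_X (a i) i)

lemma eval_linear (a : Fin 3 → K) (x : Fin 3 → K) :
    eval x (∑ i, MvPolynomial.C (a i) * X i : MvPolynomial (Fin 3) K)
      = ∑ i, a i * x i := by
  rw [map_sum]; simp

lemma common_factor_contra [Infinite K] {f g : MvPolynomial (Fin 3) K}
    (hcommon : ∀ d : MvPolynomial (Fin 3) K, d ∣ f → d ∣ g → IsUnit d)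
    {u w : Fin 3 → K} (h : LinearIndependent K ![u, w])
    (hvf : ∀ s t : K, eval (s • u + t • w) f = 0)
    (hvg : ∀ s t : K, eval (s • u + t • w) g = 0) : False := by
  obtain ⟨a, j, hj, hker⟩ := exists_ann' h
  have hvan : ∀ (q : MvPolynomial (Fin 3) K),
      (∀ s t : K, eval (s • u + t • w) q = 0) →
      ∀ v : Fin 3 → K, (∑ i, a i * v i) = 0 → eval v q = 0 := by
    intro q hq v hv
    obtain ⟨s, t, rfl⟩ := Submodule.mem_span_pair.mp ((hker v).mp hv)
    exact hq s t
  have hdf := dvd_of_vanishing a j hj f (hvan f hvf)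
  have hdg := dvd_of_vanishing a j hj g (hvan g hvg)
  have hunit := hcommon _ hdf hdg
  obtain ⟨b, hb⟩ := hunit.exists_right_inv
  have h1 := congrArg (eval u) hb
  rw [_root_.map_mul, _root_.map_one, eval_linear] at h1
  have hu0 : (∑ i, a i * u i) = 0 :=
    (hker u).mpr (Submodule.subset_span (Set.mem_insert _ _))
  rw [hu0, zero_mul] at h1
  exact zero_ne_one h1

lemma kill [Infinite K] {q : MvPolynomial (Fin 3) K} (hq2 : q.IsHomogeneous 2)
    (v0 v1 v2 v3 v4 : Fin 3 → K)
    (h01 : LinearIndependent K ![v0, v1])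
    (h234 : LinearIndependent K ![v2, v3, v4])
    (hm2 : v2 ∉ Submodule.span K {v0, v1})
    (hm3 : v3 ∉ Submodule.span K {v0, v1})
    (hm4 : v4 ∉ Submodule.span K {v0, v1})
    (hplane : ∀ s t : K, eval (s • v0 + t • v1) q = 0)
    (hz2 : eval v2 q = 0) (hz3 : eval v3 q = 0) (hz4 : eval v4 q = 0) :
    q = 0 := by
  obtain ⟨a, j, hj, hker⟩ := exists_ann' h01
  have hvan : ∀ v : Fin 3 → K, (∑ i, a i * v i) = 0 → eval v q = 0 := by
    intro v hv
    obtain ⟨s, t, rfl⟩ := Submodule.mem_span_pair.mp ((hker v).mp hv)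
    exact hplane s t
  obtain ⟨M, hM⟩ := dvd_of_vanishing a j hj q hvan
  set ℓ : MvPolynomial (Fin 3) K := ∑ i, MvPolynomial.C (a i) * X i with hℓ
  have hfac := factor_homog hq2 (linear_isHomogeneous a) hM
  set M1 := homogeneousComponent 1 M with hM1def
  have hM1homog : M1.IsHomogeneous 1 := homogeneousComponent_isHomogeneous 1 M
  have hMk : ∀ (vk : Fin 3 → K), vk ∉ Submodule.span K {v0, v1} →
      eval vk q = 0 → eval vk M1 = 0 := by
    intro vk hmk hzk
    rw [hfac, _root_.map_mul] at hzk
    have hlk : eval vk ℓ ≠ 0 := by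
      rw [hℓ, eval_linear]
      intro h0
      exact hmk ((hker vk).mp h0)
    exact (mul_eq_zero.mp hzk).resolve_left hlk
  -- the linear functional of M1 kills a spanning set
  have hset : ∀ x : Fin 3 → K, eval x M1 = 0 := by
    set c : Fin 3 → K := fun i => coeff (Finsupp.single i 1) M1 with hc
    let Lc : (Fin 3 → K) →ₗ[K] K := {
      toFun := fun x => ∑ i, c i * x i
      map_add' := fun x y => by simp [mul_add, Finset.sum_add_distrib]
      map_smul' := fun r x => by
        simp only [RingHom.id_apply, Pi.smul_apply, smul_eq_mul, Finset.mul_sum]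
        apply Finset.sum_congr rfl; intro i _; ring }
    have hLc : ∀ x, eval x M1 = Lc x := fun x => repr_linear hM1homog x
    have hkerLc : Submodule.span K (Set.range ![v2, v3, v4]) ≤ LinearMap.ker Lc := by
      rw [Submodule.span_le]
      rintro x ⟨i, rfl⟩
      fin_cases i
      · exact LinearMap.mem_ker.mpr ((hLc v2) ▸ hMk v2 hm2 hz2)
      · exact LinearMap.mem_ker.mpr ((hLc v3) ▸ hMk v3 hm3 hz3)
      · exact LinearMap.mem_ker.mpr ((hLc v4) ▸ hMk v4 hm4 hz4)
    have htop : Submodule.span K (Set.range ![v2, v3, v4]) = ⊤ :=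
      h234.span_eq_top_of_card_eq_finrank
        (by simp [Module.finrank_fintype_fun_eq_card])
    rw [htop, top_le_iff] at hkerLc
    intro x
    rw [hLc x]
    have : x ∈ LinearMap.ker Lc := hkerLc ▸ Submodule.mem_top
    exact LinearMap.mem_ker.mp this
  apply MvPolynomial.funext
  intro x
  rw [hfac, _root_.map_mul, hset x, mul_zero, map_zero]

lemma coeffs_vanish {q : MvPolynomial (Fin 3) K} {u w : Fin 3 → K} {A B C : K}
    (hABC : ∀ s t : K, eval (s • u + t • w) q = A * s ^ 2 + B * (s * t) + C * t ^ 2)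
    (hu : eval u q = 0) (hw : eval w q = 0) : A = 0 ∧ C = 0 := by
  constructor
  · have h := hABC 1 0
    rw [one_smul, zero_smul, add_zero, hu] at h
    simpa using h.symm
  · have h := hABC 0 1
    rw [one_smul, zero_smul, zero_add, hw] at h
    simpa using h.symm

end BezoutAux

open MvPolynomial BezoutAux in
/-- Bézout for conics: two distinct plane conics (nonzero homogeneous
quadratic forms over an algebraically closed field) with no common component
(no common non-unit factor) intersect in at most `2 · 2 = 4` points of ℙ². -/
theorem bezout_for_conics
    {K : Type*} [Field K] [IsAlgClosed K]
    (f g : MvPolynomial (Fin 3) K)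
    (hf : f ≠ 0) (hg : g ≠ 0)
    (hf2 : f.IsHomogeneous 2) (hg2 : g.IsHomogeneous 2)
    (hne : ∀ c : K, g ≠ c • f)  -- the conics are distinct
    (hcommon : ∀ d : MvPolynomial (Fin 3) K, d ∣ f → d ∣ g → IsUnit d) :
    ({x : Projectivization K (Fin 3 → K) |
        MvPolynomial.eval x.rep f = 0 ∧ MvPolynomial.eval x.rep g = 0}).Finite ∧
    ({x : Projectivization K (Fin 3 → K) |
        MvPolynomial.eval x.rep f = 0 ∧ MvPolynomial.eval x.rep g = 0}).ncard ≤ 4 := by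
  classical
  set S := {x : Projectivization K (Fin 3 → K) |
      MvPolynomial.eval x.rep f = 0 ∧ MvPolynomial.eval x.rep g = 0} with hS
  have claim : ∀ p : Fin 5 → Projectivization K (Fin 3 → K),
      Function.Injective p → (∀ k, p k ∈ S) → False := by
    intro p hinj hmem
    set v : Fin 5 → Fin 3 → K := fun k => (p k).rep with hv
    have hzf : ∀ k, eval (v k) f = 0 := fun k => (hmem k).1
    have hzg : ∀ k, eval (v k) g = 0 := fun k => (hmem k).2
    have hv0 : ∀ k, v k ≠ 0 := fun k => Projectivization.rep_nonzero (p k)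
    have pair : ∀ k l, k ≠ l → LinearIndependent K ![v k, v l] := by
      intro k l hkl
      rw [linearIndependent_fin2]
      constructor
      · simpa using hv0 l
      · intro c hc
        apply hkl
        apply hinj
        have h1 : p k = Projectivization.mk K (v k) (hv0 k) :=
          (Projectivization.mk_rep (p k)).symm
        have h2 : p l = Projectivization.mk K (v l) (hv0 l) :=
          (Projectivization.mk_rep (p l)).symm
        rw [h1, h2, Projectivization.mk_eq_mk_iff']
        exact ⟨c, by simpa using hc⟩
    have no3 : ∀ k l m, k ≠ l → l ≠ m → k ≠ m → LinearIndependent K ![v k, v l, v m] := by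
      intro k l m hkl hlm hkm
      by_contra hdep
      obtain ⟨gc, hgsum, i0, hgi0⟩ := Fintype.not_linearIndependent_iff.mp hdep
      have hsum : gc 0 • v k + gc 1 • v l + gc 2 • v m = 0 := by
        simpa [Fin.sum_univ_three] using hgsum
      have hgc2 : gc 2 ≠ 0 := by
        intro h2
        have hrel : gc 0 • v k + gc 1 • v l = 0 := by
          rw [h2] at hsum; simpa using hsum
        have hz := Fintype.linearIndependent_iff.mp (pair k l hkl) ![gc 0, gc 1]
          (by simpa [Fin.sum_univ_two] using hrel)
        have h0 := hz 0
        have h1 := hz 1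
        simp at h0 h1
        fin_cases i0 <;> simp_all
      have h5 : gc 2 • v m = -(gc 0 • v k + gc 1 • v l) := by
        have := hsum
        rw [add_comm (gc 0 • v k + gc 1 • v l) (gc 2 • v m)] at this
        · exact (neg_eq_of_add_eq_zero_left this).symm
      have hvm : v m = (-((gc 2)⁻¹ * gc 0)) • v k + (-((gc 2)⁻¹ * gc 1)) • v l := by
        have : v m = (gc 2)⁻¹ • (gc 2 • v m) := by
          rw [smul_smul, inv_mul_cancel₀ hgc2, one_smul]
        rw [this, h5]
        rw [smul_neg, smul_add, smul_smul, smul_smul]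
        rw [neg_add]
        rw [neg_smul, neg_smul]
      have hmem' : v m ∈ Submodule.span K {v k, v l} :=
        Submodule.mem_span_pair.mpr ⟨_, _, hvm.symm⟩
      have hplaneq : ∀ (q : MvPolynomial (Fin 3) K), q.IsHomogeneous 2 →
          eval (v k) q = 0 → eval (v l) q = 0 → eval (v m) q = 0 →
          ∀ s t : K, eval (s • v k + t • v l) q = 0 := by
        intro q hq2' e1 e2 e3 s t
        obtain ⟨A, B, C, hABC⟩ := restrict_quad hq2' (v k) (v l)
        obtain ⟨hA, hC⟩ := coeffs_vanish hABC e1 e2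
        have hs0 : -((gc 2)⁻¹ * gc 0) ≠ 0 := by
          intro h0
          have : v m = (-((gc 2)⁻¹ * gc 1)) • v l := by
            rw [hvm, h0, zero_smul, zero_add]
          have hind := pair m l hlm.symm
          rw [linearIndependent_fin2] at hind
          exact hind.2 (-((gc 2)⁻¹ * gc 1)) (by simpa using this.symm)
        have ht0 : -((gc 2)⁻¹ * gc 1) ≠ 0 := by
          intro h0
          have : v m = (-((gc 2)⁻¹ * gc 0)) • v k := by
            rw [hvm, h0, zero_smul, add_zero]
          have hind := pair m k hkm.symm
          rw [linearIndependent_fin2] at hind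
          exact hind.2 (-((gc 2)⁻¹ * gc 0)) (by simpa using this.symm)
        have hB : B = 0 := by
          have h := hABC (-((gc 2)⁻¹ * gc 0)) (-((gc 2)⁻¹ * gc 1))
          rw [← hvm, e3, hA, hC] at h
          have h' := h.symm
          simp only [zero_mul, zero_add, add_zero] at h'
          rcases mul_eq_zero.mp h' with h'' | h''
          · exact h''
          · rcases mul_eq_zero.mp h'' with h3 | h3
            · exact absurd h3 hs0
            · exact absurd h3 ht0
        rw [hABC s t, hA, hB, hC]
        ring
      exact common_factor_contra hcommon (pair k l hkl)
        (hplaneq f hf2 (hzf k) (hzf l) (hzf m))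
        (hplaneq g hg2 (hzg k) (hzg l) (hzg m))
    -- endgame
    have hnotmem : ∀ m : Fin 5, m ≠ 0 → m ≠ 1 → v m ∉ Submodule.span K {v 0, v 1} := by
      intro m hm0 hm1 hmem'
      obtain ⟨s, t, hst⟩ := Submodule.mem_span_pair.mp hmem'
      have h3 := no3 0 1 m (by decide) (Ne.symm hm1) (Ne.symm hm0)
      have hz := Fintype.linearIndependent_iff.mp h3 ![s, t, -1]
        (by
          simp only [Fin.sum_univ_three]
          simp only [Matrix.cons_val_zero, Matrix.cons_val_one, Matrix.head_cons]
          rw [hst]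
          simp)
      have := hz 2
      simp at this
    obtain ⟨Af, Bf, Cf, hF⟩ := restrict_quad hf2 (v 0) (v 1)
    obtain ⟨Ag, Bg, Cg, hG⟩ := restrict_quad hg2 (v 0) (v 1)
    obtain ⟨hAf, hCf⟩ := coeffs_vanish hF (hzf 0) (hzf 1)
    obtain ⟨hAg, hCg⟩ := coeffs_vanish hG (hzg 0) (hzg 1)
    have h234 := no3 2 3 4 (by decide) (by decide) (by decide)
    have hBf : Bf ≠ 0 := by
      intro hB0
      apply hf
      exact kill hf2 (v 0) (v 1) (v 2) (v 3) (v 4) (pair 0 1 (by decide)) h234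
        (hnotmem 2 (by decide) (by decide)) (hnotmem 3 (by decide) (by decide))
        (hnotmem 4 (by decide) (by decide))
        (fun s t => by rw [hF s t, hAf, hB0, hCf]; ring)
        (hzf 2) (hzf 3) (hzf 4)
    set q0 : MvPolynomial (Fin 3) K := Bg • f - Bf • g with hq0
    have hq02 : q0.IsHomogeneous 2 := by
      apply IsHomogeneous.sub
      · rw [smul_eq_C_mul]; exact hf2.C_mul _
      · rw [smul_eq_C_mul]; exact hg2.C_mul _
    have evq0 : ∀ x : Fin 3 → K, eval x q0 = Bg * eval x f - Bf * eval x g := by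
      intro x
      rw [hq0, map_sub, smul_eq_C_mul, smul_eq_C_mul, _root_.map_mul, _root_.map_mul,
        eval_C, eval_C]
    have hq0plane : ∀ s t : K, eval (s • v 0 + t • v 1) q0 = 0 := by
      intro s t
      rw [evq0, hF, hG, hAf, hCf, hAg, hCg]
      ring
    have hq00 : q0 = 0 :=
      kill hq02 (v 0) (v 1) (v 2) (v 3) (v 4) (pair 0 1 (by decide)) h234
        (hnotmem 2 (by decide) (by decide)) (hnotmem 3 (by decide) (by decide))
        (hnotmem 4 (by decide) (by decide)) hq0plane
        (by rw [evq0, hzf 2, hzg 2]; ring)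
        (by rw [evq0, hzf 3, hzg 3]; ring)
        (by rw [evq0, hzf 4, hzg 4]; ring)
    apply hne (Bf⁻¹ * Bg)
    have hswap : Bg • f = Bf • g := by
      have := sub_eq_zero.mp (hq0 ▸ hq00)
      exact this
    calc g = Bf⁻¹ • (Bf • g) := by rw [smul_smul, inv_mul_cancel₀ hBf, one_smul]
      _ = Bf⁻¹ • (Bg • f) := by rw [hswap]
      _ = (Bf⁻¹ * Bg) • f := by rw [smul_smul]
  -- counting
  have noset : ∀ t : Set (Projectivization K (Fin 3 → K)),
      t ⊆ S → t.Finite → t.ncard = 5 → False := by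
    intro t hts htfin htcard
    have hcard5 : htfin.toFinset.card = 5 := by
      rw [← htcard]
      exact (Set.ncard_eq_toFinset_card t htfin).symm
    let e := (Finset.equivFinOfCardEq hcard5).symm
    apply claim (fun i => (e i : Projectivization K (Fin 3 → K)))
    · intro i j hij
      exact e.injective (Subtype.ext hij)
    · intro i
      exact hts (htfin.mem_toFinset.mp (e i).2)
  have hfin : S.Finite := by
    by_contra hinf
    obtain ⟨t, hts, htfin, htcard⟩ := (show S.Infinite from hinf).exists_subset_ncard_eq 5
    exact noset t hts htfin htcard
  refine ⟨hfin, ?_⟩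
  by_contra hcard
  push_neg at hcard
  obtain ⟨t, hts, htcard⟩ := Set.exists_subset_card_eq (show 5 ≤ S.ncard from hcard)
  exact noset t hts (hfin.subset hts) htcard
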